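/- arXiv:1605.02894 — 7 statements merged into one kernel-verified Lean document; each statement's English description precedes it below -/
import Mathlib

section
/- For every integer i ≥ 2, the function g_i(t) = ((t^i - 1)(t + 1))/((t^i + 1)(t - 1)) is strictly decreasing on (1, ∞): if 1 < s < t then g_i(t) < g_i(s). -/
private lemma aux_pair (s t : ℝ) (hs : 1 ≤ s) (ht : 1 ≤ t) (m n : ℕ) :
    s ^ m * t ^ n + s ^ n * t ^ m ≤ s ^ m * t ^ m + s ^ n * t ^ n := by
  rcases le_total m n with h | h
  · have h1 : s ^ m ≤ s ^ n := pow_le_pow_right₀ hs h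
    have h2 : t ^ m ≤ t ^ n := pow_le_pow_right₀ ht h
    nlinarith
  · have h1 : s ^ n ≤ s ^ m := pow_le_pow_right₀ hs h
    have h2 : t ^ n ≤ t ^ m := pow_le_pow_right₀ ht h
    nlinarith

theorem g_strict_decreasing (i : ℕ) (hi : 2 ≤ i) (s t : ℝ) (hs : 1 < s) (hst : s < t) :
    ((t ^ i - 1) * (t + 1)) / ((t ^ i + 1) * (t - 1)) <
      ((s ^ i - 1) * (s + 1)) / ((s ^ i + 1) * (s - 1)) := by
  have ht : 1 < t := hs.trans hst
  -- key sum inequality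
  have hsum : ∑ k ∈ Finset.range i, t ^ k * s ^ (i - 1 - k)
      < ∑ k ∈ Finset.range i, (s * t) ^ k := by
    have h2 : ∑ k ∈ Finset.range i, (t ^ k * s ^ (i - 1 - k) + t ^ (i - 1 - k) * s ^ k)
        < ∑ k ∈ Finset.range i, ((s * t) ^ k + (s * t) ^ (i - 1 - k)) := by
      apply Finset.sum_lt_sum
      · intro k hk
        have := aux_pair s t hs.le ht.le k (i - 1 - k)
        rw [mul_pow, mul_pow]
        nlinarith
      · refine ⟨0, Finset.mem_range.mpr (by omega), ?_⟩
        have h1 : (1:ℝ) < s ^ (i - 1 - 0) := one_lt_pow₀ hs (by omega)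
        have h2 : (1:ℝ) < t ^ (i - 1 - 0) := one_lt_pow₀ ht (by omega)
        simp only [pow_zero, mul_pow]
        nlinarith
    have hrefl1 : ∑ k ∈ Finset.range i, (s * t) ^ (i - 1 - k)
        = ∑ k ∈ Finset.range i, (s * t) ^ k := Finset.sum_range_reflect _ _
    have hrefl2 : ∑ k ∈ Finset.range i, t ^ (i - 1 - k) * s ^ k
        = ∑ k ∈ Finset.range i, t ^ k * s ^ (i - 1 - k) := by
      rw [← Finset.sum_range_reflect (fun k => t ^ k * s ^ (i - 1 - k)) i]
      apply Finset.sum_congr rfl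
      intro k hk
      have hk' : k < i := Finset.mem_range.mp hk
      rw [Nat.sub_sub_self (by omega : k ≤ i - 1)]
    rw [Finset.sum_add_distrib, Finset.sum_add_distrib, hrefl1, hrefl2] at h2
    linarith
  -- key inequality
  have hst1 : (0:ℝ) < s * t - 1 := by nlinarith
  have hts : (0:ℝ) < t - s := by linarith
  have hgeo1 : (∑ k ∈ Finset.range i, (s * t) ^ k) * (s * t - 1) = (s * t) ^ i - 1 :=
    geom_sum_mul _ _
  have hgeo2 : (∑ k ∈ Finset.range i, t ^ k * s ^ (i - 1 - k)) * (t - s) = t ^ i - s ^ i :=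
    geom_sum₂_mul _ _ _
  have key : (t ^ i - s ^ i) * (s * t - 1) < ((s * t) ^ i - 1) * (t - s) := by
    rw [← hgeo1, ← hgeo2]
    calc (∑ k ∈ Finset.range i, t ^ k * s ^ (i - 1 - k)) * (t - s) * (s * t - 1)
        < (∑ k ∈ Finset.range i, (s * t) ^ k) * (t - s) * (s * t - 1) := by
          apply mul_lt_mul_of_pos_right _ hst1
          exact mul_lt_mul_of_pos_right hsum hts
      _ = (∑ k ∈ Finset.range i, (s * t) ^ k) * (s * t - 1) * (t - s) := by ring
  -- denominators positive
  have hsi : (1:ℝ) < s ^ i := one_lt_pow₀ hs (by omega)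
  have hti : (1:ℝ) < t ^ i := one_lt_pow₀ ht (by omega)
  have hd1 : (0:ℝ) < (t ^ i + 1) * (t - 1) := by nlinarith
  have hd2 : (0:ℝ) < (s ^ i + 1) * (s - 1) := by nlinarith
  rw [div_lt_div_iff₀ hd1 hd2]
  have hexp : (s * t) ^ i = s ^ i * t ^ i := mul_pow s t i
  nlinarith [key]
end

section
/- For every integer i ≥ 2 and every real t > 1, we have 1 < g_i(t) < i, where g_i(t) = ((t^i - 1)(t + 1))/((t^i + 1)(t - 1)). -/
theorem g_bounds (i : ℕ) (hi : 2 ≤ i) (t : ℝ) (ht : 1 < t) :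
    1 < ((t ^ i - 1) * (t + 1)) / ((t ^ i + 1) * (t - 1)) ∧
      ((t ^ i - 1) * (t + 1)) / ((t ^ i + 1) * (t - 1)) < (i : ℝ) := by
  have ht0 : (0:ℝ) < t - 1 := by linarith
  have htpos : (0:ℝ) < t := by linarith
  have hpow : t < t ^ i := by
    calc t = t ^ 1 := (pow_one t).symm
    _ < t ^ i := pow_lt_pow_right₀ ht (by omega)
  have hden : 0 < (t ^ i + 1) * (t - 1) := by
    apply mul_pos (by nlinarith) ht0
  constructor
  · rw [lt_div_iff₀ hden]
    nlinarith
  · rw [div_lt_iff₀ hden]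
    -- key: (t^i - 1)(t+1) < i * ((t^i + 1)(t-1)) for i ≥ 2, by induction
    clear hpow hden
    induction i, hi using Nat.le_induction with
    | base =>
      push_cast
      nlinarith [sq_nonneg (t - 1), mul_pos (mul_pos ht0 ht0) ht0]
    | succ n hn ih =>
      have hpn : t < t ^ n := by
        calc t = t ^ 1 := (pow_one t).symm
        _ < t ^ n := pow_lt_pow_right₀ ht (by omega)
      have hbern : 1 + (n : ℝ) * (t - 1) ≤ t ^ n := by
        have := one_add_mul_le_pow (a := t - 1) (by linarith) n
        simpa using this
      push_cast
      rw [pow_succ]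
      push_cast at ih
      nlinarith [mul_pos htpos (sub_pos.mpr ih),
        mul_nonneg ht0.le (sub_nonneg.mpr hbern),
        mul_nonneg (sq_nonneg (t - 1)) (by nlinarith : (0:ℝ) ≤ t ^ n - 1)]
end

section
/- For every integer i ≥ 2 and real t > 1, the function φ̄(t) = (1 + i·t^{i+1}) - (t^{2i} + i·t^{i-1}) is negative, i.e. 1 + i·t^{i+1} < t^{2i} + i·t^{i-1}. -/
lemma sum_pow_gt (t : ℝ) (ht : 1 < t) :
    ∀ n : ℕ, 1 ≤ n → ((n : ℝ) + 1) * t ^ n < ∑ k ∈ Finset.range (n + 1), t ^ (2 * k) := by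
  intro n hn
  induction n with
  | zero => omega
  | succ m ih =>
    rcases Nat.eq_or_lt_of_le hn with h | h
    · -- m = 0, n = 1
      have hm : m = 0 := by omega
      subst hm
      simp [Finset.sum_range_succ]
      nlinarith [sq_nonneg (t - 1)]
    · have hm : 1 ≤ m := by omega
      have IH := ih hm
      rw [Finset.sum_range_succ]
      have hb : 1 + ((m : ℝ) + 2) * (t - 1) ≤ t ^ (m + 2) := by
        have h := one_add_mul_le_pow (a := t - 1) (by linarith) (m + 2)
        have e : 1 + (t - 1) = t := by ring
        rw [e] at h
        push_cast at h ⊢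
        linarith
      have htm : 0 < t ^ m := pow_pos (by linarith) m
      have key : ((m : ℝ) + 2) * t ^ (m + 1) ≤ ((m : ℝ) + 1) * t ^ m + t ^ (2 * (m + 1)) := by
        have h2 : t ^ (2 * (m + 1)) = t ^ (m + 2) * t ^ m := by ring
        have h1 : t ^ (m + 1) = t * t ^ m := by ring
        rw [h2, h1]
        nlinarith [htm]
      push_cast
      push_cast at IH key
      linarith

theorem phibar_neg (i : ℕ) (hi : 2 ≤ i) (t : ℝ) (ht : 1 < t) :
    1 + (i : ℝ) * t ^ (i + 1) < t ^ (2 * i) + (i : ℝ) * t ^ (i - 1) := by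
  obtain ⟨j, rfl⟩ : ∃ j, i = j + 1 := ⟨i - 1, by omega⟩
  have hj : 1 ≤ j := by omega
  have hsum := sum_pow_gt t ht j hj
  have hfact : (∑ k ∈ Finset.range (j + 1), t ^ (2 * k)) * (t ^ 2 - 1)
      = t ^ (2 * (j + 1)) - 1 := by
    have := geom_sum_mul (t ^ 2) (j + 1)
    simpa [← pow_mul] using this
  have ht2 : 0 < t ^ 2 - 1 := by nlinarith
  have hlt : ((j : ℝ) + 1) * t ^ j * (t ^ 2 - 1) < t ^ (2 * (j + 1)) - 1 := by
    rw [← hfact]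
    exact mul_lt_mul_of_pos_right hsum ht2
  have h1 : t ^ (j + 1 + 1) = t ^ j * t ^ 2 := by ring
  have h2 : (j + 1 - 1 : ℕ) = j := by omega
  rw [h2]
  push_cast
  push_cast at hlt
  nlinarith [hlt]
end

section
/- Let K ≥ 1 be an integer and consider the (K+1)×(K+1) symmetric matrix B with B_{ii} = K/(K+1) for 1 ≤ i ≤ K, B_{K+1,K+1} = (K+2)/(K+1), B_{i,K+1} = B_{K+1,i} = 1/(K+1) for 1 ≤ i ≤ K, and B_{ij} = 0 otherwise. Then the eigenvalues of B are K/(K+1) with multiplicity K-1, 1 - 1/√(K+1), and 1 + 1/√(K+1). -/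
/-!
After splitting off the last coordinate, `B` is the bordered matrix `[[a • 1, s], [s, b]]` with
`a = K/(K+1)`, `b = (K+2)/(K+1)`, `s = 1/(K+1)`. Taking the Schur complement of the scalar block
`(X - a) • 1` of its characteristic matrix gives `(X - a)^(K-1) * ((X - a)(X - b) - K s²)`, and the
quadratic factor has root sum `a + b = 2` and root product `ab - Ks² = K/(K+1)`, so its roots are
`1 ± 1/√(K+1)`.
-/

open Polynomial Matrix

namespace Matrix

variable {F : Type*} [Field F] {n o : Type*} [Fintype n] [DecidableEq n] [Nonempty n]
  [Fintype o] [DecidableEq o] [Unique o]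

theorem det_fromBlocks_smul_one_const {y : F} (hy : y ≠ 0) (u v z : F) :
    (fromBlocks (y • 1 : Matrix n n F) (of fun _ _ => u) (of fun _ _ => v)
      (of fun _ _ => z : Matrix o o F)).det =
      y ^ (Fintype.card n - 1) * (y * z - Fintype.card n * (u * v)) := by
  have hright : (y • 1 : Matrix n n F) * (y⁻¹ • 1) = 1 := by
    rw [smul_mul_smul_comm, mul_inv_cancel₀ hy, one_mul, one_smul]
  have : Invertible (y • 1 : Matrix n n F) := invertibleOfRightInverse _ _ hright
  rw [det_fromBlocks₁₁, invOf_eq_right_inv hright, det_smul, det_one, det_unique]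
  simp only [sub_apply, mul_apply, smul_apply, one_apply, of_apply, smul_eq_mul, mul_ite,
    mul_one, mul_zero, Finset.sum_ite_eq', Finset.mem_univ, if_true,
    Finset.sum_const, Finset.card_univ, nsmul_eq_mul]
  obtain ⟨k, hk⟩ := Nat.exists_eq_add_one.2 (Fintype.card_pos (α := n))
  rw [hk, pow_succ, Nat.add_sub_cancel]
  field_simp

theorem charpoly_fromBlocks_smul_one_const (a u v d : F) :
    (fromBlocks (a • 1 : Matrix n n F) (of fun _ _ => u) (of fun _ _ => v)
      (of fun _ _ => d : Matrix o o F)).charpoly =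
      (X - C a) ^ (Fintype.card n - 1) *
        ((X - C a) * (X - C d) - C (Fintype.card n * (u * v))) := by
  -- `X - C a` is not a unit in `F[X]`, so the Schur complement is taken in the fraction field.
  let φ := algebraMap F[X] (FractionRing F[X])
  have hcharmatrix : (fromBlocks (a • 1 : Matrix n n F) (of fun _ _ => u) (of fun _ _ => v)
      (of fun _ _ => d : Matrix o o F)).charmatrix.map φ =
      fromBlocks (φ (X - C a) • 1) (of fun _ _ => -φ (C u)) (of fun _ _ => -φ (C v))
        (of fun _ _ => φ (X - C d)) := by
    ext (i | i) (j | j)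
    · obtain rfl | hij := eq_or_ne i j <;> simp [*]
    · simp
    · simp
    · simp [Subsingleton.elim i j]
  apply IsFractionRing.injective F[X] (FractionRing F[X])
  have hφ : φ (X - C a) ≠ 0 :=
    (map_ne_zero_iff φ (IsFractionRing.injective _ _)).2 (X_sub_C_ne_zero a)
  rw [charpoly, RingHom.map_det, RingHom.mapMatrix_apply, hcharmatrix,
    det_fromBlocks_smul_one_const hφ]
  simp [φ]

end Matrix

theorem Polynomial.X_sub_C_mul_X_sub_C_sub_C {R : Type*} [CommRing R] {a b c r₁ r₂ : R}
    (hsum : r₁ + r₂ = a + b) (hprod : r₁ * r₂ = a * b - c) :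
    (X - C a) * (X - C b) - C c = (X - C r₁) * (X - C r₂) := by
  have hsumC := congrArg C hsum
  have hprodC := congrArg C hprod
  simp only [map_add, map_mul, map_sub] at hsumC hprodC
  linear_combination X * hsumC - hprodC

theorem B_charpoly (K : ℕ) (hK : 1 ≤ K)
    (B : Matrix (Fin (K + 1)) (Fin (K + 1)) ℝ)
    (hB : ∀ i j : Fin (K + 1), B i j =
      if i = j then (if (i : ℕ) < K then (K : ℝ) / (K + 1) else ((K : ℝ) + 2) / (K + 1))
      else if ((i : ℕ) < K ∧ (j : ℕ) = K) ∨ ((i : ℕ) = K ∧ (j : ℕ) < K) then 1 / ((K : ℝ) + 1)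
      else 0) :
    B.charpoly = (X - C ((K : ℝ) / (K + 1))) ^ (K - 1) *
      (X - C (1 - 1 / Real.sqrt (K + 1))) * (X - C (1 + 1 / Real.sqrt (K + 1))) := by
  have : Nonempty (Fin K) := ⟨⟨0, hK⟩⟩
  have hblocks : reindex finSumFinEquiv.symm finSumFinEquiv.symm B =
      fromBlocks (((K : ℝ) / (K + 1)) • 1) (of fun _ _ => 1 / ((K : ℝ) + 1))
        (of fun _ _ => 1 / ((K : ℝ) + 1)) (of fun _ _ => ((K : ℝ) + 2) / (K + 1)) := by
    ext (i | i) (j | j)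
    · obtain rfl | hij := eq_or_ne i j
      · simp [hB]
      · simp [hB, Fin.ext_iff, Fin.val_injective.ne hij, i.isLt.ne, j.isLt.ne]
    · simp [hB, Fin.ext_iff, i.isLt.ne]
    · simp [hB, Fin.ext_iff, j.isLt.ne']
    · simp [hB, Subsingleton.elim i j]
  have hsqrt := Real.sq_sqrt (by positivity : (0 : ℝ) ≤ K + 1)
  rw [← charpoly_reindex finSumFinEquiv.symm, hblocks, charpoly_fromBlocks_smul_one_const,
    Fintype.card_fin, mul_assoc, X_sub_C_mul_X_sub_C_sub_C]
  · field_simp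
    ring
  · field_simp
    linear_combination ((K : ℝ) + 1) * hsqrt
end

section
/- Let K ≥ 1 and let B be the (K+1)×(K+1) matrix with diagonal entries K/(K+1) (first K) and (K+2)/(K+1) (last), off-diagonal entries 1/(K+1) in the last row and column (first K positions), and 0 elsewhere. Then for every x ∈ ℝ^{K+1}, (1 - 1/√(K+1))‖x‖² ≤ xᵀBx ≤ (1 + 1/√(K+1))‖x‖². -/
/-!
Write `x = (y, t)` with `y ∈ ℝᴷ`. Then `xᵀBx = ‖x‖² + (t² - ‖y‖² + 2 t ∑ yᵢ) / (K + 1)`, and by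
Cauchy–Schwarz `(∑ yᵢ)² ≤ K ‖y‖²`. The bracket is thus dominated by the quadratic form
`t² - a² + 2√K a t` in `(a, t)`, whose eigenvalues are `±√(K + 1)`; dividing by `K + 1` gives a
deviation of at most `‖x‖² / √(K + 1)` from `‖x‖²`.
-/

open Finset Matrix

theorem abs_two_mul_le_of_sq_le {s t a u v : ℝ} (hu : 0 ≤ u) (hv : 0 ≤ v) (ha : 0 ≤ a)
    (hs : s ^ 2 ≤ u * v * a) : |2 * s * t| ≤ u * a + v * t ^ 2 := by
  refine abs_le_of_sq_le_sq ?_ (by positivity)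
  have hst : (2 * s * t) ^ 2 ≤ 4 * (u * v * a) * t ^ 2 := by
    rw [mul_pow, mul_pow]
    nlinarith [sq_nonneg t]
  -- AM-GM: `(u a + v t²)² - 4 u v a t² = (u a - v t²)²`
  nlinarith [sq_nonneg (u * a - v * t ^ 2)]

theorem abs_sq_sub_add_two_mul_le {s t a c : ℝ} (hc : 0 ≤ c) (ha : 0 ≤ a)
    (hs : s ^ 2 ≤ c * a) : |t ^ 2 - a + 2 * s * t| ≤ √(c + 1) * (a + t ^ 2) := by
  set r := √(c + 1)
  have hr : (r + 1) * (r - 1) = c := by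
    linear_combination Real.mul_self_sqrt (show 0 ≤ c + 1 by linarith)
  have hr1 : 1 ≤ r := Real.one_le_sqrt.mpr (by linarith)
  have hupper := abs_two_mul_le_of_sq_le (t := t) (u := r + 1) (v := r - 1)
    (by linarith) (by linarith) ha (by rwa [hr])
  have hlower := abs_two_mul_le_of_sq_le (t := -t) (u := r - 1) (v := r + 1)
    (by linarith) (by linarith) ha (by rwa [mul_comm (r - 1), hr])
  rw [abs_le]
  constructor
  · linarith [le_abs_self (2 * s * -t)]
  · linarith [le_abs_self (2 * s * t)]

noncomputable def bMatrix (K : ℕ) : Matrix (Fin (K + 1)) (Fin (K + 1)) ℝ := Matrix.of fun i j =>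
      if i = j then (if (i : ℕ) < K then (K : ℝ) / (K + 1) else ((K : ℝ) + 2) / (K + 1))
      else if ((i : ℕ) < K ∧ (j : ℕ) = K) ∨ ((i : ℕ) = K ∧ (j : ℕ) < K) then 1 / ((K : ℝ) + 1)
      else 0

namespace bMatrix
variable {K : ℕ}

theorem castSucc_castSucc (i j : Fin K) :
    bMatrix K i.castSucc j.castSucc = if i = j then (K : ℝ) / (K + 1) else 0 := by
  simp [bMatrix, Fin.castSucc_inj, i.isLt, j.isLt, i.isLt.ne, j.isLt.ne]

theorem castSucc_last (i : Fin K) : bMatrix K i.castSucc (Fin.last K) = 1 / ((K : ℝ) + 1) := by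
  simp [bMatrix, (Fin.castSucc_lt_last i).ne, i.isLt]

theorem last_castSucc (j : Fin K) : bMatrix K (Fin.last K) j.castSucc = 1 / ((K : ℝ) + 1) := by
  simp [bMatrix, (Fin.castSucc_lt_last j).ne', j.isLt]

theorem last_last : bMatrix K (Fin.last K) (Fin.last K) = ((K : ℝ) + 2) / (K + 1) := by
  simp [bMatrix]

theorem mulVec_castSucc (x : Fin (K + 1) → ℝ) (i : Fin K) :
    (bMatrix K *ᵥ x) i.castSucc = K / (K + 1) * x i.castSucc + 1 / (K + 1) * x (Fin.last K) := by
  simp [Matrix.mulVec, dotProduct, Fin.sum_univ_castSucc, castSucc_castSucc, castSucc_last]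

theorem mulVec_last (x : Fin (K + 1) → ℝ) :
    (bMatrix K *ᵥ x) (Fin.last K) =
      1 / (K + 1) * ∑ i : Fin K, x i.castSucc + (K + 2) / (K + 1) * x (Fin.last K) := by
  simp [Matrix.mulVec, dotProduct, Fin.sum_univ_castSucc, last_castSucc, last_last, mul_sum]

theorem dotProduct_mulVec_self (x : Fin (K + 1) → ℝ) :
    x ⬝ᵥ bMatrix K *ᵥ x = ∑ i, x i ^ 2 + 1 / (K + 1) * (x (Fin.last K) ^ 2
      - ∑ i : Fin K, x i.castSucc ^ 2 + 2 * (∑ i : Fin K, x i.castSucc) * x (Fin.last K)) := by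
  have hrows (a b : ℝ) : ∑ i : Fin K, x i.castSucc * (a * x i.castSucc + b * x (Fin.last K)) =
      a * ∑ i : Fin K, x i.castSucc ^ 2 + b * (∑ i : Fin K, x i.castSucc) * x (Fin.last K) := by
    simp only [mul_sum, sum_mul, ← sum_add_distrib]
    exact sum_congr rfl fun _ _ => by ring
  have hK : (K : ℝ) + 1 ≠ 0 := by positivity
  rw [dotProduct, Fin.sum_univ_castSucc, Fin.sum_univ_castSucc]
  simp only [mulVec_castSucc, mulVec_last, hrows]
  field_simp
  ring

theorem abs_dotProduct_mulVec_self_sub_le (x : Fin (K + 1) → ℝ) :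
    |x ⬝ᵥ bMatrix K *ᵥ x - ∑ i, x i ^ 2| ≤ 1 / √(K + 1) * ∑ i, x i ^ 2 := by
  have hCS : (∑ i : Fin K, x i.castSucc) ^ 2 ≤ K * ∑ i : Fin K, x i.castSucc ^ 2 := by
    simpa using sq_sum_le_card_mul_sum_sq (s := univ) (f := fun i : Fin K => x i.castSucc)
  have hE := abs_sq_sub_add_two_mul_le (t := x (Fin.last K)) K.cast_nonneg
    (sum_nonneg fun i _ => sq_nonneg (x i.castSucc)) hCS
  have hsqrt : 1 / ((K : ℝ) + 1) * √(K + 1) = 1 / √(K + 1) := by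
    rw [one_div_mul_eq_div, Real.sqrt_div_self']
  rw [dotProduct_mulVec_self, add_sub_cancel_left, abs_mul, abs_of_pos (by positivity),
    Fin.sum_univ_castSucc]
  exact (mul_le_mul_of_nonneg_left hE (by positivity)).trans_eq (by rw [← mul_assoc, hsqrt])

end bMatrix

theorem B_quadratic_form_bounds_general (K : ℕ)
    (B : Matrix (Fin (K + 1)) (Fin (K + 1)) ℝ)
    (hB : ∀ i j : Fin (K + 1), B i j =
      if i = j then (if (i : ℕ) < K then (K : ℝ) / (K + 1) else ((K : ℝ) + 2) / (K + 1))
      else if ((i : ℕ) < K ∧ (j : ℕ) = K) ∨ ((i : ℕ) = K ∧ (j : ℕ) < K) then 1 / ((K : ℝ) + 1)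
      else 0)
    (x : Fin (K + 1) → ℝ) :
    (1 - 1 / Real.sqrt (K + 1)) * (∑ i, x i ^ 2) ≤ dotProduct x (B.mulVec x) ∧
      dotProduct x (B.mulVec x) ≤ (1 + 1 / Real.sqrt (K + 1)) * (∑ i, x i ^ 2) := by
  obtain rfl : B = bMatrix K := Matrix.ext hB
  have h := abs_le.mp (bMatrix.abs_dotProduct_mulVec_self_sub_le x)
  constructor <;> linarith [h.1, h.2]

theorem B_quadratic_form_bounds (K : ℕ) (hK : 1 ≤ K)
    (B : Matrix (Fin (K + 1)) (Fin (K + 1)) ℝ)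
    (hB : ∀ i j : Fin (K + 1), B i j =
      if i = j then (if (i : ℕ) < K then (K : ℝ) / (K + 1) else ((K : ℝ) + 2) / (K + 1))
      else if ((i : ℕ) < K ∧ (j : ℕ) = K) ∨ ((i : ℕ) = K ∧ (j : ℕ) < K) then 1 / ((K : ℝ) + 1)
      else 0)
    (x : Fin (K + 1) → ℝ) :
    (1 - 1 / Real.sqrt (K + 1)) * (∑ i, x i ^ 2) ≤ dotProduct x (B.mulVec x) ∧
      dotProduct x (B.mulVec x) ≤ (1 + 1 / Real.sqrt (K + 1)) * (∑ i, x i ^ 2) :=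
  B_quadratic_form_bounds_general K B hB x
end

section
/- Let α > 1, let K ≥ 1, and let t_1 ≥ αt_2 ≥ α²t_3 ≥ … ≥ α^{K-1}t_K > 0 (i.e. t_j ≥ α·t_{j+1} > 0 for all j). Then for every 1 ≤ i ≤ K, (Σ_{j=1}^{i} t_j)² / (Σ_{j=1}^{i} t_j²) ≤ ((α^i - 1)(α + 1))/((α^i + 1)(α - 1)). -/
/-!
The extremal sequence is the geometric one, `t j = α⁻ʲ`, for which the bound is an equality.
Induct on `i`, carrying along the lower bound `t i * (1 + α + ⋯ + αⁱ⁻¹) ≤ ∑_{j ≤ i} t j`.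
Appending the term `u = t (i + 1)`, the bound for `i` reduces that for `i + 1` to the
nonnegativity of a binary quadratic form in `(∑_{j ≤ i} t j, u)`, which factors into two
linear forms; both are nonnegative because `u` is small compared with the partial sum.
-/

open Finset

lemma sq_ratio_step {a b S Q u : ℝ} (ha : 1 < a) (hb : 1 ≤ b) (hu : 0 ≤ u)
    (hSu : b * (a - 1) * u ≤ (b - 1) * S)
    (hSQ : (a + 1) * (b - 1) * S ^ 2 ≤ (a - 1) * (b + 1) * Q) :
    (a * b + 1) * (b - 1) * (S + u) ^ 2 ≤ (a * b - 1) * (b + 1) * (Q + u ^ 2) := by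
  have hab : 0 ≤ a * b - 1 := by nlinarith
  have hfactor : 0 ≤ a * (b - 1) * S - (a - 1) * u := by
    nlinarith [mul_le_mul_of_nonneg_left hSu (by linarith : (0 : ℝ) ≤ a),
      mul_nonneg (mul_nonneg (sub_nonneg.2 ha.le) hu) hab]
  have key : (a - 1) * ((a * b - 1) * (b + 1) * (Q + u ^ 2) - (a * b + 1) * (b - 1) * (S + u) ^ 2)
      = (a * b - 1) * ((a - 1) * (b + 1) * Q - (a + 1) * (b - 1) * S ^ 2)
        + 2 * (((b - 1) * S - b * (a - 1) * u) * (a * (b - 1) * S - (a - 1) * u)) := by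
    ring
  have hnonneg : 0 ≤ (a - 1) * ((a * b - 1) * (b + 1) * (Q + u ^ 2)
      - (a * b + 1) * (b - 1) * (S + u) ^ 2) := by
    rw [key]
    exact add_nonneg (mul_nonneg hab (sub_nonneg.2 hSQ))
      (mul_nonneg zero_le_two (mul_nonneg (sub_nonneg.2 hSu) hfactor))
  exact sub_nonneg.1 (nonneg_of_mul_nonneg_right hnonneg (sub_pos.2 ha))

section DecayingSequence

variable {α : ℝ} {K : ℕ} {t : ℕ → ℝ}

lemma pos_of_decaying (hα : 0 < α) (hpos : 0 < t K)
    (hchain : ∀ j, 1 ≤ j → j < K → α * t (j + 1) ≤ t j) :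
    ∀ j, 1 ≤ j → j ≤ K → 0 < t j := by
  intro j hj hjK
  induction hjK using Nat.decreasingInduction with
  | self => exact hpos
  | of_succ j hjK ih => exact (mul_pos hα (ih (by omega))).trans_le (hchain j hj hjK)

lemma mul_geom_sum_le_sum_Icc (hα : 0 ≤ α)
    (hchain : ∀ j, 1 ≤ j → j < K → α * t (j + 1) ≤ t j) :
    ∀ i, 1 ≤ i → i ≤ K → t i * ∑ k ∈ range i, α ^ k ≤ ∑ j ∈ Icc 1 i, t j := by
  intro i hi
  induction i, hi using Nat.le_induction with
  | base => simp
  | succ i hi ih =>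
    intro hiK
    have hG : 0 ≤ ∑ k ∈ range i, α ^ k := sum_nonneg fun k _ => pow_nonneg hα k
    calc t (i + 1) * ∑ k ∈ range (i + 1), α ^ k
        = α * t (i + 1) * ∑ k ∈ range i, α ^ k + t (i + 1) := by rw [geom_sum_succ]; ring
      _ ≤ t i * ∑ k ∈ range i, α ^ k + t (i + 1) :=
        add_le_add_left (mul_le_mul_of_nonneg_right (hchain i hi hiK) hG) _
      _ ≤ ∑ j ∈ Icc 1 (i + 1), t j := by
        rw [sum_Icc_succ_top (by omega)]
        exact add_le_add_left (ih (by omega)) _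

lemma sq_sum_Icc_le (hα : 1 < α)
    (hchain : ∀ j, 1 ≤ j → j < K → α * t (j + 1) ≤ t j)
    (hnonneg : ∀ j, 1 ≤ j → j ≤ K → 0 ≤ t j) :
    ∀ i, 1 ≤ i → i ≤ K →
      (α ^ i + 1) * (α - 1) * (∑ j ∈ Icc 1 i, t j) ^ 2 ≤
        (α ^ i - 1) * (α + 1) * ∑ j ∈ Icc 1 i, t j ^ 2 := by
  intro i hi
  induction i, hi using Nat.le_induction with
  | base =>
    intro _
    simp only [Icc_self, sum_singleton, pow_one]
    exact le_of_eq (by ring)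
  | succ i hi ih =>
    intro hiK
    have hgeom := mul_geom_sum_le_sum_Icc (by linarith) hchain i hi (by omega)
    have hG : 0 ≤ ∑ k ∈ range i, α ^ k := sum_nonneg fun k _ => pow_nonneg (by linarith) k
    have hsmall : α * (α ^ i - 1) * t (i + 1) ≤ (α - 1) * ∑ j ∈ Icc 1 i, t j :=
      calc α * (α ^ i - 1) * t (i + 1)
          = (α - 1) * ((α * t (i + 1)) * ∑ k ∈ range i, α ^ k) := by
            rw [← geom_sum_mul]; ring
        _ ≤ (α - 1) * (t i * ∑ k ∈ range i, α ^ k) :=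
            mul_le_mul_of_nonneg_left (mul_le_mul_of_nonneg_right (hchain i hi hiK) hG)
              (by linarith)
        _ ≤ (α - 1) * ∑ j ∈ Icc 1 i, t j := mul_le_mul_of_nonneg_left hgeom (by linarith)
    rw [sum_Icc_succ_top (by omega), sum_Icc_succ_top (by omega), pow_succ]
    exact sq_ratio_step (one_lt_pow₀ hα (by omega)) hα.le (hnonneg _ (by omega) hiK)
      hsmall (ih (by omega))

end DecayingSequence

theorem decaying_ratio_bound_general (α : ℝ) (hα : 1 < α) (K : ℕ) (t : ℕ → ℝ)
    (hpos : 0 < t K) (hchain : ∀ j, 1 ≤ j → j < K → α * t (j + 1) ≤ t j) :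
    ∀ i, 1 ≤ i → i ≤ K →
      (∑ j ∈ Finset.Icc 1 i, t j) ^ 2 / (∑ j ∈ Finset.Icc 1 i, (t j) ^ 2) ≤
        ((α ^ i - 1) * (α + 1)) / ((α ^ i + 1) * (α - 1)) := by
  intro i hi hiK
  have htpos := pos_of_decaying (by linarith) hpos hchain
  have hQ : 0 < ∑ j ∈ Icc 1 i, t j ^ 2 :=
    sum_pos (fun j hj => pow_pos (htpos j (mem_Icc.1 hj).1 ((mem_Icc.1 hj).2.trans hiK)) 2)
      (nonempty_Icc.2 hi)
  have hden : 0 < (α ^ i + 1) * (α - 1) := by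
    have := pow_pos (by linarith : (0 : ℝ) < α) i
    nlinarith
  rw [div_le_div_iff₀ hQ hden]
  linarith [sq_sum_Icc_le hα hchain (fun j hj hjK => (htpos j hj hjK).le) i hi hiK]

theorem decaying_ratio_bound (α : ℝ) (hα : 1 < α) (K : ℕ) (hK : 1 ≤ K) (t : ℕ → ℝ)
    (hpos : 0 < t K) (hchain : ∀ j, 1 ≤ j → j < K → α * t (j + 1) ≤ t j) :
    ∀ i, 1 ≤ i → i ≤ K →
      (∑ j ∈ Finset.Icc 1 i, t j) ^ 2 / (∑ j ∈ Finset.Icc 1 i, (t j) ^ 2) ≤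
        ((α ^ i - 1) * (α + 1)) / ((α ^ i + 1) * (α - 1)) :=
  decaying_ratio_bound_general α hα K t hpos hchain
end

section
/- Let K ≥ 1 be an integer, and let t_1, …, t_K be positive reals with t_1 ≥ α₁ t_2 and t_j ≥ t_{j+1} for 2 ≤ j ≤ K-1, for some α₁ ≥ 1. Then (Σ_{j=1}^{K} t_j)²/(Σ_{j=1}^{K} t_j²) ≤ (α₁ + (K-1))²/(α₁² + (K-1)). -/
/-!
Give the dominant term `t₁` weight `α₁` and every other term weight `1`. Weighted Cauchy–Schwarz
bounds `(∑ tⱼ)²` by `(α₁ + (K - 1)) (t₁² / α₁ + ∑_{j ≥ 2} tⱼ²)`, and since every `tⱼ` with `j ≥ 2`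
is at most `t₁ / α₁`, the tail `∑_{j ≥ 2} tⱼ²` is at most `(K - 1) t₁² / α₁²`; under this constraint
the weighted bound is at most `ĥ_{K-1}(α₁)` times `∑ tⱼ²`.
-/

open Finset

lemma div_add_mul_le_mul_add {α a n R : ℝ} (hα : 1 ≤ α) (h : α ^ 2 * R ≤ n * a) :
    (a / α + R) * (α ^ 2 + n) ≤ (α + n) * (a + R) := by
  have hα0 : 0 < α := by linarith
  have key : 0 ≤ (α - 1) * (n * a - α ^ 2 * R) / α :=
    div_nonneg (mul_nonneg (by linarith) (by linarith)) hα0.le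
  have hdiff : (α + n) * (a + R) - (a / α + R) * (α ^ 2 + n) =
      (α - 1) * (n * a - α ^ 2 * R) / α := by
    field_simp
    ring
  linarith

lemma sq_sum_le_mul_div_add_sum_erase_sq {ι : Type*} [DecidableEq ι] {s : Finset ι} {i : ι} (hi : i ∈ s)
    (t : ι → ℝ) {α : ℝ} (hα : 0 < α) :
    (∑ j ∈ s, t j) ^ 2 ≤
      (α + ((#s : ℝ) - 1)) * (t i ^ 2 / α + ∑ j ∈ s.erase i, t j ^ 2) := by
  set w : ι → ℝ := fun j ↦ if j = i then α else 1
  have hw : ∀ j, 0 < w j := fun j ↦ by unfold w; split_ifs <;> positivity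
  have hCS := sum_sq_le_sum_mul_sum_of_sq_le_mul s (fun j _ ↦ (hw j).le)
    (fun j _ ↦ div_nonneg (sq_nonneg (t j)) (hw j).le)
    (fun j _ ↦ (mul_div_cancel₀ (t j ^ 2) (hw j).ne').ge)
  have hw_erase : ∀ j ∈ s.erase i, w j = 1 := fun j hj ↦ if_neg (ne_of_mem_erase hj)
  have hsum_w : ∑ j ∈ s, w j = α + ((#s : ℝ) - 1) := by
    rw [← add_sum_erase s w hi, sum_congr rfl hw_erase, sum_const, card_erase_of_mem hi,
      nsmul_one, Nat.cast_pred (card_pos.mpr ⟨i, hi⟩)]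
    simp [w]
  have hsum_div : ∑ j ∈ s, t j ^ 2 / w j = t i ^ 2 / α + ∑ j ∈ s.erase i, t j ^ 2 := by
    rw [← add_sum_erase s _ hi, sum_congr rfl fun j hj ↦ by rw [hw_erase j hj, div_one]]
    simp [w]
  rwa [hsum_w, hsum_div] at hCS

theorem sq_sum_div_sum_sq_le_of_dominant {ι : Type*} [DecidableEq ι] {s : Finset ι} {i : ι}
    (hi : i ∈ s) {t : ι → ℝ} {α : ℝ} (hα : 1 ≤ α) (hdom : ∀ j ∈ s.erase i, α * |t j| ≤ |t i|) :
    (∑ j ∈ s, t j) ^ 2 / ∑ j ∈ s, t j ^ 2 ≤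
      (α + ((#s : ℝ) - 1)) ^ 2 / (α ^ 2 + ((#s : ℝ) - 1)) := by
  set n : ℝ := (#s : ℝ) - 1
  set R := ∑ j ∈ s.erase i, t j ^ 2
  have hn : 0 ≤ n := by
    simpa [n] using (Nat.one_le_cast (α := ℝ)).mpr (card_pos.mpr ⟨i, hi⟩)
  have hα0 : 0 < α := by linarith
  have htail : α ^ 2 * R ≤ n * t i ^ 2 := by
    calc α ^ 2 * R = ∑ j ∈ s.erase i, (α * |t j|) ^ 2 := by
          simp only [R, mul_sum, mul_pow, sq_abs]
      _ ≤ ∑ _j ∈ s.erase i, |t i| ^ 2 :=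
          sum_le_sum fun j hj ↦ pow_le_pow_left₀ (by positivity) (hdom j hj) 2
      _ = n * t i ^ 2 := by
          rw [sum_const, card_erase_of_mem hi, nsmul_eq_mul, sq_abs,
            Nat.cast_pred (card_pos.mpr ⟨i, hi⟩)]
  have hden : 0 < α ^ 2 + n := by positivity
  rw [← add_sum_erase s (fun j ↦ t j ^ 2) hi]
  refine div_le_of_le_mul₀ (by positivity) (by positivity) ?_
  calc (∑ j ∈ s, t j) ^ 2 ≤ (α + n) * (t i ^ 2 / α + R) := sq_sum_le_mul_div_add_sum_erase_sq hi t hα0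
    _ ≤ (α + n) ^ 2 / (α ^ 2 + n) * (t i ^ 2 + R) := by
      rw [div_mul_eq_mul_div, le_div_iff₀ hden, sq (α + n), mul_assoc, mul_assoc]
      exact mul_le_mul_of_nonneg_left (div_add_mul_le_mul_add hα htail) (by positivity)

theorem partial_ratio_bound (K : ℕ) (hK : 1 ≤ K) (α₁ : ℝ) (hα : 1 ≤ α₁) (t : ℕ → ℝ)
    (hpos : ∀ j, 1 ≤ j → j ≤ K → 0 < t j)
    (h12 : 2 ≤ K → α₁ * t 2 ≤ t 1)
    (hmono : ∀ j, 2 ≤ j → j < K → t (j + 1) ≤ t j) :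
    (∑ j ∈ Finset.Icc 1 K, t j) ^ 2 / (∑ j ∈ Finset.Icc 1 K, (t j) ^ 2) ≤
      (α₁ + ((K : ℝ) - 1)) ^ 2 / (α₁ ^ 2 + ((K : ℝ) - 1)) := by
  have hle : ∀ j, 2 ≤ j → j ≤ K → t j ≤ t 2 := by
    intro j h2j
    induction j, h2j using Nat.le_induction with
    | base => exact fun _ ↦ le_rfl
    | succ m h2m ih => exact fun hmK ↦ (hmono m h2m (by omega)).trans (ih (by omega))
  have hdom : ∀ j ∈ (Icc 1 K).erase 1, α₁ * |t j| ≤ |t 1| := fun j hj ↦ by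
    obtain ⟨hj1, hjK⟩ := mem_Icc.mp (mem_of_mem_erase hj)
    have h2j : 2 ≤ j := by have := ne_of_mem_erase hj; omega
    rw [abs_of_pos (hpos j hj1 hjK), abs_of_pos (hpos 1 le_rfl hK)]
    calc α₁ * t j ≤ α₁ * t 2 := mul_le_mul_of_nonneg_left (hle j h2j hjK) (by linarith)
      _ ≤ t 1 := h12 (h2j.trans hjK)
  simpa using sq_sum_div_sum_sq_le_of_dominant (left_mem_Icc.mpr hK) hα hdom
end
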